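/- arXiv:2402.07096 — 5 statements merged into one kernel-verified Lean document; each statement's English description precedes it below -/
import Mathlib

section
/- Let R be a supercommutative superring that is a unique factorization superring (UFSR). Then every normal irreducible element a of R is a zerodivisor: there exists x ≠ 0 in R with a * x = 0 or x * a = 0. (Remark 3.7 iv of the paper.) -/
/-! Basic notions for supercommutative superrings, following the paper
"A note on unique factorization in superrings". -/

section Defs

variable {R : Type*} [Ring R]

/-- `a` divides `b`: `b = c * a * d` for some `c, d`. -/
def SDvd (a b : R) : Prop := ∃ c d : R, b = c * a * d

/-- `a` is associated to `b`: `a = u * b * v` for units `u, v`. -/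
def SAssociated (a b : R) : Prop := ∃ u v : Rˣ, a = (u : R) * b * (v : R)

/-- `a` is normal: `aR = Ra` as sets. -/
def SNormal (a : R) : Prop :=
  {x : R | ∃ r : R, x = a * r} = {x : R | ∃ r : R, x = r * a}

/-- `a` is irreducible: a non-unit which is not a product of two non-units. -/
def SIrreducible (a : R) : Prop :=
  ¬ IsUnit a ∧ ∀ b c : R, a = b * c → IsUnit b ∨ IsUnit c

/-- `R` is a unique factorization superring: every nonzero non-unit admits a
factorization into normal irreducible elements, uniquely up to order and associates. -/
def IsUFSR (R : Type*) [Ring R] : Prop :=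
  (∀ x : R, x ≠ 0 → ¬ IsUnit x →
      ∃ (d : ℕ) (f : Fin d → R),
        (∀ i, SNormal (f i) ∧ SIrreducible (f i)) ∧ x = (List.ofFn f).prod) ∧
  (∀ x : R, x ≠ 0 → ¬ IsUnit x →
      ∀ (d n : ℕ) (f : Fin d → R) (g : Fin n → R),
        (∀ i, SNormal (f i) ∧ SIrreducible (f i)) →
        (∀ i, SNormal (g i) ∧ SIrreducible (g i)) →
        x = (List.ofFn f).prod → x = (List.ofFn g).prod →
        ∃ h : d = n, ∃ σ : Equiv.Perm (Fin n),
          ∀ i : Fin n, SAssociated (f (Fin.cast h.symm i)) (g (σ i)))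

end Defs

/-- The supercommutativity condition for a `ℤ₂`-grading `𝒜` on `R`. -/
def SuperComm {R : Type*} [Ring R] (𝒜 : ZMod 2 → AddSubgroup R) : Prop :=
  ∀ (i j : ZMod 2), ∀ x ∈ 𝒜 i, ∀ y ∈ 𝒜 j,
    x * y = ((-1 : ℤ) ^ (i.val * j.val)) • (y * x)

/-- `2` is a non-zerodivisor in `R`. -/
def TwoRegular (R : Type*) [Ring R] : Prop := ∀ x : R, 2 * x = 0 → x = 0

/-- The canonical superideal `𝒥 = R·R₁`, the (two-sided, by supercommutativity)
ideal generated by the odd part. -/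
def canonicalSuperideal {R : Type*} [Ring R] (𝒜 : ZMod 2 → AddSubgroup R) : Ideal R :=
  Ideal.span (𝒜 1 : Set R)

/-- `R` is a superdomain: `𝒥` is a proper completely prime ideal. -/
def IsSuperdomain {R : Type*} [Ring R] (𝒜 : ZMod 2 → AddSubgroup R) : Prop :=
  (1 : R) ∉ canonicalSuperideal 𝒜 ∧
    ∀ a b : R, a * b ∈ canonicalSuperideal 𝒜 →
      a ∈ canonicalSuperideal 𝒜 ∨ b ∈ canonicalSuperideal 𝒜

/-! ### Auxiliary machinery -/

section Assoc
variable {R : Type*} [Ring R]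

lemma sassoc_refl (a : R) : SAssociated a a := ⟨1, 1, by simp⟩

lemma sassoc_symm {a b : R} (h : SAssociated a b) : SAssociated b a := by
  obtain ⟨u, v, h⟩ := h
  refine ⟨u⁻¹, v⁻¹, ?_⟩
  rw [h, mul_assoc (u : R) b (v : R), Units.inv_mul_cancel_left,
    Units.mul_inv_cancel_right]

lemma sassoc_trans {a b c : R} (h1 : SAssociated a b) (h2 : SAssociated b c) :
    SAssociated a c := by
  obtain ⟨u, v, h1⟩ := h1
  obtain ⟨u', v', h2⟩ := h2
  exact ⟨u * u', v' * v, by rw [h1, h2]; simp [mul_assoc]⟩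

end Assoc

section Bar
variable {R : Type*} [Ring R] (𝒜 : ZMod 2 → AddSubgroup R) [GradedRing 𝒜]

/-- even component -/
noncomputable def pe (r : R) : R := (DirectSum.decompose 𝒜 r 0 : R)
/-- odd component -/
noncomputable def po (r : R) : R := (DirectSum.decompose 𝒜 r 1 : R)
/-- the parity involution -/
noncomputable def sbar (r : R) : R := pe 𝒜 r - po 𝒜 r

lemma pe_mem (r : R) : pe 𝒜 r ∈ 𝒜 0 := SetLike.coe_mem _
lemma po_mem (r : R) : po 𝒜 r ∈ 𝒜 1 := SetLike.coe_mem _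

lemma pe_add (s t : R) : pe 𝒜 (s + t) = pe 𝒜 s + pe 𝒜 t := by
  simp [pe, DirectSum.decompose_add]
lemma po_add (s t : R) : po 𝒜 (s + t) = po 𝒜 s + po 𝒜 t := by
  simp [po, DirectSum.decompose_add]

lemma pe_add_po (r : R) : pe 𝒜 r + po 𝒜 r = r := by
  induction r using DirectSum.Decomposition.inductionOn 𝒜 with
  | zero => simp [pe, po]
  | @homogeneous i m =>
      rcases (by decide : ∀ j : ZMod 2, j = 0 ∨ j = 1) i with rfl | rfl
      · have h1 : pe 𝒜 (m : R) = (m : R) :=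
          DirectSum.decompose_of_mem_same 𝒜 m.2
        have h2 : po 𝒜 (m : R) = 0 :=
          DirectSum.decompose_of_mem_ne 𝒜 m.2 (by decide : (0 : ZMod 2) ≠ 1)
        rw [h1, h2, add_zero]
      · have h1 : pe 𝒜 (m : R) = 0 :=
          DirectSum.decompose_of_mem_ne 𝒜 m.2 (by decide : (1 : ZMod 2) ≠ 0)
        have h2 : po 𝒜 (m : R) = (m : R) :=
          DirectSum.decompose_of_mem_same 𝒜 m.2
        rw [h1, h2, zero_add]
  | add m m' hm hm' =>
      rw [pe_add, po_add, add_add_add_comm, hm, hm']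

lemma pe_of_parts {e o : R} (he : e ∈ 𝒜 0) (ho : o ∈ 𝒜 1) : pe 𝒜 (e + o) = e := by
  rw [pe_add]
  have h1 : pe 𝒜 e = e := DirectSum.decompose_of_mem_same 𝒜 he
  have h2 : pe 𝒜 o = 0 :=
    DirectSum.decompose_of_mem_ne 𝒜 ho (by decide : (1 : ZMod 2) ≠ 0)
  rw [h1, h2, add_zero]

lemma po_of_parts {e o : R} (he : e ∈ 𝒜 0) (ho : o ∈ 𝒜 1) : po 𝒜 (e + o) = o := by
  rw [po_add]
  have h1 : po 𝒜 e = 0 :=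
    DirectSum.decompose_of_mem_ne 𝒜 he (by decide : (0 : ZMod 2) ≠ 1)
  have h2 : po 𝒜 o = o := DirectSum.decompose_of_mem_same 𝒜 ho
  rw [h1, h2, zero_add]

lemma sbar_add (s t : R) : sbar 𝒜 (s + t) = sbar 𝒜 s + sbar 𝒜 t := by
  simp only [sbar, pe_add, po_add]; abel

lemma sbar_zero : sbar 𝒜 (0 : R) = 0 := by simp [sbar, pe, po]

lemma sbar_one : sbar 𝒜 (1 : R) = 1 := by
  have h1 : (1 : R) ∈ 𝒜 0 := SetLike.GradedOne.one_mem
  have hpe : pe 𝒜 (1 : R) = 1 := DirectSum.decompose_of_mem_same 𝒜 h1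
  have hpo : po 𝒜 (1 : R) = 0 :=
    DirectSum.decompose_of_mem_ne 𝒜 h1 (by decide : (0 : ZMod 2) ≠ 1)
  simp [sbar, hpe, hpo]

lemma sbar_mul (s t : R) : sbar 𝒜 (s * t) = sbar 𝒜 s * sbar 𝒜 t := by
  have hs := pe_add_po 𝒜 s
  have ht := pe_add_po 𝒜 t
  have hmul : s * t = (pe 𝒜 s * pe 𝒜 t + po 𝒜 s * po 𝒜 t)
      + (pe 𝒜 s * po 𝒜 t + po 𝒜 s * pe 𝒜 t) := by
    nth_rewrite 1 [← hs, ← ht]; noncomm_ring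
  have he : (pe 𝒜 s * pe 𝒜 t + po 𝒜 s * po 𝒜 t) ∈ 𝒜 0 := by
    apply AddSubgroup.add_mem
    · have := SetLike.mul_mem_graded (pe_mem 𝒜 s) (pe_mem 𝒜 t)
      simpa using this
    · have := SetLike.mul_mem_graded (po_mem 𝒜 s) (po_mem 𝒜 t)
      have h11 : (1 : ZMod 2) + 1 = 0 := by decide
      rwa [h11] at this
  have ho : (pe 𝒜 s * po 𝒜 t + po 𝒜 s * pe 𝒜 t) ∈ 𝒜 1 := by
    apply AddSubgroup.add_mem
    · have := SetLike.mul_mem_graded (pe_mem 𝒜 s) (po_mem 𝒜 t)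
      have h01 : (0 : ZMod 2) + 1 = 1 := by decide
      rwa [h01] at this
    · have := SetLike.mul_mem_graded (po_mem 𝒜 s) (pe_mem 𝒜 t)
      have h10 : (1 : ZMod 2) + 0 = 1 := by decide
      rwa [h10] at this
  have hpe : pe 𝒜 (s * t) = pe 𝒜 s * pe 𝒜 t + po 𝒜 s * po 𝒜 t := by
    rw [hmul]; exact pe_of_parts 𝒜 he ho
  have hpo : po 𝒜 (s * t) = pe 𝒜 s * po 𝒜 t + po 𝒜 s * pe 𝒜 t := by
    rw [hmul]; exact po_of_parts 𝒜 he ho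
  simp only [sbar, hpe, hpo]
  noncomm_ring

lemma sbar_sbar (r : R) : sbar 𝒜 (sbar 𝒜 r) = r := by
  have h : sbar 𝒜 r = pe 𝒜 r + (- po 𝒜 r) := by rw [sbar, sub_eq_add_neg]
  have hpe : pe 𝒜 (sbar 𝒜 r) = pe 𝒜 r := by
    rw [h]; exact pe_of_parts 𝒜 (pe_mem 𝒜 r) (AddSubgroup.neg_mem _ (po_mem 𝒜 r))
  have hpo : po 𝒜 (sbar 𝒜 r) = - po 𝒜 r := by
    rw [h]; exact po_of_parts 𝒜 (pe_mem 𝒜 r) (AddSubgroup.neg_mem _ (po_mem 𝒜 r))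
  rw [sbar, hpe, hpo, sub_neg_eq_add]; exact pe_add_po 𝒜 r

lemma sbar_odd {θ : R} (hθ : θ ∈ 𝒜 1) : sbar 𝒜 θ = -θ := by
  have hpe : pe 𝒜 θ = 0 :=
    DirectSum.decompose_of_mem_ne 𝒜 hθ (by decide : (1 : ZMod 2) ≠ 0)
  have hpo : po 𝒜 θ = θ := DirectSum.decompose_of_mem_same 𝒜 hθ
  simp [sbar, hpe, hpo]

lemma sbar_pow (r : R) (n : ℕ) : sbar 𝒜 (r ^ n) = (sbar 𝒜 r) ^ n := by
  induction n with
  | zero => simp [sbar_one]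
  | succ n ih => rw [pow_succ, pow_succ, sbar_mul, ih]

lemma sbar_isUnit {x : R} (h : IsUnit x) : IsUnit (sbar 𝒜 x) := by
  obtain ⟨u, rfl⟩ := h
  exact isUnit_iff_exists.mpr ⟨sbar 𝒜 (↑u⁻¹ : R),
    by rw [← sbar_mul, Units.mul_inv, sbar_one],
    by rw [← sbar_mul, Units.inv_mul, sbar_one]⟩

lemma sbar_inj {x y : R} (h : sbar 𝒜 x = sbar 𝒜 y) : x = y := by
  have := congrArg (sbar 𝒜) h
  rwa [sbar_sbar, sbar_sbar] at this

/-- the supercommutation rule: an odd element `θ` satisfies `θ * s = sbar s * θ`. -/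
lemma odd_mul (hsc : SuperComm 𝒜) {θ : R} (hθ : θ ∈ 𝒜 1) (s : R) :
    θ * s = sbar 𝒜 s * θ := by
  have h0 := hsc 1 0 θ hθ (pe 𝒜 s) (pe_mem 𝒜 s)
  have h1 := hsc 1 1 θ hθ (po 𝒜 s) (po_mem 𝒜 s)
  have e0 : ((1 : ZMod 2).val * (0 : ZMod 2).val) = 0 := by decide
  have e1 : ((1 : ZMod 2).val * (1 : ZMod 2).val) = 1 := by decide
  rw [e0, pow_zero, one_zsmul] at h0
  rw [e1, pow_one] at h1
  have h1' : θ * po 𝒜 s = -(po 𝒜 s * θ) := by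
    rw [h1, neg_zsmul, one_zsmul]
  calc θ * s = θ * (pe 𝒜 s + po 𝒜 s) := by rw [pe_add_po]
    _ = θ * pe 𝒜 s + θ * po 𝒜 s := by rw [mul_add]
    _ = pe 𝒜 s * θ - po 𝒜 s * θ := by rw [h0, h1']; abel
    _ = sbar 𝒜 s * θ := by rw [sbar, sub_mul]

lemma odd_sq (hsc : SuperComm 𝒜) (h2 : TwoRegular R) {θ : R} (hθ : θ ∈ 𝒜 1) :
    θ * θ = 0 := by
  have h := hsc 1 1 θ hθ θ hθ
  have e1 : ((1 : ZMod 2).val * (1 : ZMod 2).val) = 1 := by decide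
  rw [e1, pow_one, neg_zsmul, one_zsmul] at h
  have hadd : θ * θ + θ * θ = 0 := by nth_rewrite 2 [h]; exact add_neg_cancel _
  apply h2
  rw [two_mul]; exact hadd

end Bar

section RegUtil
variable {R : Type*} [Ring R]

lemma move_right {a : R} (hnorm : SNormal a) (z : R) : ∃ w, a * z = w * a :=
  (Set.ext_iff.mp hnorm (a * z)).mp ⟨z, rfl⟩

lemma move_left {a : R} (hnorm : SNormal a) (z : R) : ∃ w, z * a = a * w :=
  (Set.ext_iff.mp hnorm (z * a)).mpr ⟨z, rfl⟩

lemma not_unit_mulL {a : R} (hL : ∀ x : R, a * x = 0 → x = 0) (hnu : ¬ IsUnit a)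
    (z : R) : ¬ IsUnit (a * z) := by
  intro h
  obtain ⟨u, hu⟩ := h
  have h1 : a * (z * (↑u⁻¹ : R)) = 1 := by
    rw [← mul_assoc, ← hu, Units.mul_inv]
  have h2 : a * ((z * (↑u⁻¹ : R)) * a - 1) = 0 := by
    rw [mul_sub, mul_one, ← mul_assoc, h1, one_mul, sub_self]
  have h3 := sub_eq_zero.mp (hL _ h2)
  exact hnu (isUnit_iff_exists.mpr ⟨_, h1, h3⟩)

lemma not_unit_mulR {a : R} (hR : ∀ x : R, x * a = 0 → x = 0) (hnu : ¬ IsUnit a)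
    (z : R) : ¬ IsUnit (z * a) := by
  intro h
  obtain ⟨u, hu⟩ := h
  have h1 : ((↑u⁻¹ : R) * z) * a = 1 := by
    rw [mul_assoc, ← hu, Units.inv_mul]
  have h2 : (a * ((↑u⁻¹ : R) * z) - 1) * a = 0 := by
    rw [sub_mul, one_mul, mul_assoc, h1, mul_one, sub_self]
  have h3 := sub_eq_zero.mp (hR _ h2)
  exact hnu (isUnit_iff_exists.mpr ⟨_, h3, h1⟩)

lemma pow_regL {a : R} (hL : ∀ x : R, a * x = 0 → x = 0) :
    ∀ (n : ℕ) (x : R), a ^ n * x = 0 → x = 0 := by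
  intro n
  induction n with
  | zero => intro x hx; rwa [pow_zero, one_mul] at hx
  | succ n ih =>
      intro x hx
      rw [pow_succ', mul_assoc] at hx
      exact ih x (hL _ hx)

lemma pow_regR {a : R} (hR : ∀ x : R, x * a = 0 → x = 0) :
    ∀ (n : ℕ) (x : R), x * a ^ n = 0 → x = 0 := by
  intro n
  induction n with
  | zero => intro x hx; rwa [pow_zero, mul_one] at hx
  | succ n ih =>
      intro x hx
      rw [pow_succ, ← mul_assoc] at hx
      exact ih x (hR _ hx)

lemma pow_ne_zero_of_regL [Nontrivial R] {a : R} (hL : ∀ x : R, a * x = 0 → x = 0)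
    (n : ℕ) : a ^ n ≠ 0 := by
  intro h
  have : (1 : R) = 0 := pow_regL hL n 1 (by rw [h, zero_mul])
  exact one_ne_zero this

lemma unit_collapse {a : R} (hnorm : SNormal a) (hR : ∀ x : R, x * a = 0 → x = 0)
    (v : Rˣ) : ∃ K : R, IsUnit K ∧ a * (v : R) = K * a := by
  obtain ⟨K₁, h₁⟩ := move_right hnorm (v : R)
  obtain ⟨K₂, h₂⟩ := move_right hnorm ((↑v⁻¹ : R))
  have e1 : (K₁ * K₂ - 1) * a = 0 := by
    have : (K₁ * K₂) * a = a := by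
      rw [mul_assoc, ← h₂, ← mul_assoc, ← h₁, mul_assoc, Units.mul_inv, mul_one]
    rw [sub_mul, one_mul, this, sub_self]
  have e2 : (K₂ * K₁ - 1) * a = 0 := by
    have : (K₂ * K₁) * a = a := by
      rw [mul_assoc, ← h₁, ← mul_assoc, ← h₂, mul_assoc, Units.inv_mul, mul_one]
    rw [sub_mul, one_mul, this, sub_self]
  exact ⟨K₁, isUnit_iff_exists.mpr ⟨K₂, sub_eq_zero.mp (hR _ e1), sub_eq_zero.mp (hR _ e2)⟩, h₁⟩

lemma collapse_unit_isUnit {a : R} (hnorm : SNormal a) (hR : ∀ x : R, x * a = 0 → x = 0)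
    {W : R} (hW : IsUnit W) : ∃ K : R, IsUnit K ∧ a * W = K * a := by
  obtain ⟨u, rfl⟩ := hW
  exact unit_collapse hnorm hR u

lemma assoc_left {a x : R} (hnorm : SNormal a) (hR : ∀ x : R, x * a = 0 → x = 0)
    (h : SAssociated x a) : ∃ W : R, IsUnit W ∧ x = W * a := by
  obtain ⟨u, v, hx⟩ := h
  obtain ⟨K, hKu, hK⟩ := unit_collapse hnorm hR v
  exact ⟨(u : R) * K, (Units.isUnit u).mul hKu, by rw [hx, mul_assoc, hK, ← mul_assoc]⟩

lemma unit_move {a : R} (hnorm : SNormal a) (hR : ∀ x : R, x * a = 0 → x = 0) :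
    ∀ (k : ℕ) (W : R), IsUnit W → ∃ W' : R, IsUnit W' ∧ a ^ k * W = W' * a ^ k := by
  intro k
  induction k with
  | zero => intro W hW; exact ⟨W, hW, by rw [pow_zero, one_mul, mul_one]⟩
  | succ k ih =>
      intro W hW
      obtain ⟨K, hKu, hK⟩ := collapse_unit_isUnit hnorm hR hW
      obtain ⟨W'', hW''u, hW''⟩ := ih K hKu
      refine ⟨W'', hW''u, ?_⟩
      rw [pow_succ, mul_assoc, hK, ← mul_assoc, hW'', mul_assoc]

lemma prod_collapse {a : R} (hnorm : SNormal a) (hR : ∀ x : R, x * a = 0 → x = 0) :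
    ∀ (p : ℕ) (F : Fin p → R), (∀ i, ∃ W : R, IsUnit W ∧ F i = W * a) →
      ∃ V : R, IsUnit V ∧ (List.ofFn F).prod = V * a ^ p := by
  intro p
  induction p with
  | zero => intro F _; exact ⟨1, isUnit_one, by simp⟩
  | succ p ih =>
      intro F hF
      obtain ⟨W₀, hW₀u, hW₀⟩ := hF 0
      obtain ⟨V', hV'u, hV'⟩ := ih (fun i => F i.succ) (fun i => hF i.succ)
      obtain ⟨K, hKu, hK⟩ := collapse_unit_isUnit hnorm hR hV'u
      refine ⟨W₀ * K, hW₀u.mul hKu, ?_⟩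
      have hofn : List.ofFn F = F 0 :: List.ofFn (fun i => F i.succ) := by
        rw [List.ofFn_succ]
      rw [hofn, List.prod_cons, hV', hW₀, pow_succ']
      calc W₀ * a * (V' * a ^ p) = W₀ * (a * V') * a ^ p := by
            rw [mul_assoc, mul_assoc, mul_assoc]
        _ = W₀ * K * (a * a ^ p) := by rw [hK, mul_assoc, mul_assoc, mul_assoc]

end RegUtil

set_option maxHeartbeats 1000000 in
/-- **Remark 3.7 iv)**: in a UFSR, every normal irreducible element is a
zerodivisor. -/
theorem ufsr_normal_irreducible_is_zerodivisor
    {R : Type*} [Ring R] [Nontrivial R]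
    (𝒜 : ZMod 2 → AddSubgroup R) [GradedRing 𝒜]
    (hsc : SuperComm 𝒜) (h2 : TwoRegular R) (hodd : 𝒜 1 ≠ ⊥)
    (hufsr : IsUFSR R)
    (a : R) (hnorm : SNormal a) (hirr : SIrreducible a) :
    ∃ x : R, x ≠ 0 ∧ (a * x = 0 ∨ x * a = 0) := by
  classical
  by_contra hcon
  push_neg at hcon
  have hL : ∀ x : R, a * x = 0 → x = 0 := by
    intro x hx
    by_contra h0
    exact (hcon x h0).1 hx
  have hR : ∀ x : R, x * a = 0 → x = 0 := by
    intro x hx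
    by_contra h0
    exact (hcon x h0).2 hx
  have hnu : ¬ IsUnit a := hirr.1
  have ha0 : a ≠ 0 := by
    intro h
    rcases hirr.2 0 0 (by rw [h, mul_zero]) with h' | h' <;>
      exact zero_ne_one (isUnit_zero_iff.mp h')
  -- an odd element
  obtain ⟨θ, hθmem, hθ0⟩ : ∃ θ : R, θ ∈ 𝒜 1 ∧ θ ≠ 0 := by
    by_contra h
    push_neg at h
    exact hodd ((AddSubgroup.eq_bot_iff_forall _).mpr h)
  have hθθ : θ * θ = 0 := odd_sq 𝒜 hsc h2 hθmem
  have hrule : ∀ s : R, θ * s = sbar 𝒜 s * θ := odd_mul 𝒜 hsc hθmem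
  have hθu : ¬ IsUnit θ := by
    intro h
    obtain ⟨u, hu⟩ := h
    have h1 : (↑u⁻¹ : R) * (θ * θ) = 0 := by rw [hθθ, mul_zero]
    rw [← hu, ← mul_assoc, Units.inv_mul, one_mul] at h1
    exact hθ0 (by rw [← hu]; exact h1)
  -- the parity conjugate of a
  obtain ⟨b, hb⟩ : ∃ b : R, b = sbar 𝒜 a := ⟨_, rfl⟩
  have hbb : sbar 𝒜 b = a := by rw [hb, sbar_sbar]
  have hLb : ∀ x : R, b * x = 0 → x = 0 := by
    intro x hx
    have h1 : sbar 𝒜 (b * x) = 0 := by rw [hx, sbar_zero]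
    rw [sbar_mul, hbb] at h1
    have h2' := hL _ h1
    have h3' := congrArg (sbar 𝒜) h2'
    rwa [sbar_sbar, sbar_zero] at h3'
  have hRb : ∀ x : R, x * b = 0 → x = 0 := by
    intro x hx
    have h1 : sbar 𝒜 (x * b) = 0 := by rw [hx, sbar_zero]
    rw [sbar_mul, hbb] at h1
    have h2' := hR _ h1
    have h3' := congrArg (sbar 𝒜) h2'
    rwa [sbar_sbar, sbar_zero] at h3'
  have hnub : ¬ IsUnit b := by
    intro h
    have h' := sbar_isUnit 𝒜 h
    rw [hbb] at h'
    exact hnu h'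
  have hnormb : SNormal b := by
    apply Set.ext
    intro x
    simp only [Set.mem_setOf_eq]
    constructor
    · rintro ⟨r, rfl⟩
      obtain ⟨w, hw⟩ := move_right hnorm (sbar 𝒜 r)
      refine ⟨sbar 𝒜 w, ?_⟩
      have h1 : b * r = sbar 𝒜 (a * sbar 𝒜 r) := by
        rw [sbar_mul, sbar_sbar, hb]
      rw [h1, hw, sbar_mul, ← hb]
    · rintro ⟨r, rfl⟩
      obtain ⟨w, hw⟩ := move_left hnorm (sbar 𝒜 r)
      refine ⟨sbar 𝒜 w, ?_⟩
      have h1 : r * b = sbar 𝒜 (sbar 𝒜 r * a) := by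
        rw [sbar_mul, sbar_sbar, hb]
      rw [h1, hw, sbar_mul, ← hb]
  have hirrb : SIrreducible b := by
    refine ⟨hnub, ?_⟩
    intro c e h
    have hacd : a = sbar 𝒜 c * sbar 𝒜 e := by
      rw [← hbb, h, sbar_mul]
    rcases hirr.2 _ _ hacd with h' | h'
    · left
      have h'' := sbar_isUnit 𝒜 h'
      rwa [sbar_sbar] at h''
    · right
      have h'' := sbar_isUnit 𝒜 h'
      rwa [sbar_sbar] at h''
  -- the key identity
  have haθ : a * θ = θ * b := by
    have h1 := hrule b
    rw [hbb] at h1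
    exact h1.symm
  -- factorization of θ
  obtain ⟨d, fθ, hfθ, hθprod⟩ := hufsr.1 θ hθ0 hθu
  by_cases hAB : SAssociated a b
  · -- CASE B : a is associated to its conjugate
    obtain ⟨W₀, hW₀u, hW₀⟩ : ∃ W₀ : R, IsUnit W₀ ∧ b = W₀ * a :=
      assoc_left hnorm hR (sassoc_symm hAB)
    have hd0 : d ≠ 0 := by
      intro h
      subst h
      rw [List.ofFn_zero, List.prod_nil] at hθprod
      exact hθu (by rw [hθprod]; exact isUnit_one)
    obtain ⟨k, hk⟩ := Nat.exists_eq_succ_of_ne_zero hd0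
    have hadne : a ^ d ≠ 0 := pow_ne_zero_of_regL hL d
    have hbdne : b ^ d ≠ 0 := pow_ne_zero_of_regL hLb d
    have hIdent : (a ^ d + θ) * (b ^ d - θ) = a ^ d * b ^ d := by
      have h1 : θ * b ^ d = a ^ d * θ := by
        have h1' := hrule (b ^ d)
        rw [sbar_pow, hbb] at h1'
        exact h1'
      calc (a ^ d + θ) * (b ^ d - θ)
          = a ^ d * b ^ d - a ^ d * θ + (θ * b ^ d - θ * θ) := by noncomm_ring
        _ = a ^ d * b ^ d := by rw [h1, hθθ, sub_zero]; abel
    have hprod0 : a ^ d * b ^ d ≠ 0 := by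
      intro h
      exact hbdne (pow_regL hL d _ h)
    have hprodu : ¬ IsUnit (a ^ d * b ^ d) := by
      rw [hk, pow_succ', mul_assoc]
      exact not_unit_mulL hL hnu _
    have hwsq : ∀ u : Rˣ, ((↑u⁻¹ : R) * θ) * ((↑u⁻¹ : R) * θ) = 0 := by
      intro u
      rw [mul_assoc, ← mul_assoc θ (↑u⁻¹ : R) θ, hrule ((↑u⁻¹ : R)), mul_assoc,
        hθθ, mul_zero, mul_zero]
    have hX0 : a ^ d + θ ≠ 0 := by
      intro h
      have hθeq : θ = -(a ^ d) := eq_neg_of_add_eq_zero_right h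
      have h1 : θ * θ = a ^ d * a ^ d := by rw [hθeq, neg_mul_neg]
      rw [hθθ] at h1
      exact hadne (pow_regL hL d _ h1.symm)
    have hXu : ¬ IsUnit (a ^ d + θ) := by
      intro h
      obtain ⟨u, hu⟩ := h
      have had : a ^ d = (↑u : R) * (1 - (↑u⁻¹ : R) * θ) := by
        rw [mul_sub, mul_one, ← mul_assoc, Units.mul_inv, one_mul, hu]
        abel
      have h1w : IsUnit (1 - (↑u⁻¹ : R) * θ) := by
        refine isUnit_iff_exists.mpr ⟨1 + (↑u⁻¹ : R) * θ, ?_, ?_⟩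
        · have h3 : (1 - (↑u⁻¹ : R) * θ) * (1 + (↑u⁻¹ : R) * θ)
              = 1 - ((↑u⁻¹ : R) * θ) * ((↑u⁻¹ : R) * θ) := by noncomm_ring
          rw [h3, hwsq u, sub_zero]
        · have h3 : (1 + (↑u⁻¹ : R) * θ) * (1 - (↑u⁻¹ : R) * θ)
              = 1 - ((↑u⁻¹ : R) * θ) * ((↑u⁻¹ : R) * θ) := by noncomm_ring
          rw [h3, hwsq u, sub_zero]
      have hunit : IsUnit (a ^ d) := had ▸ (Units.isUnit u).mul h1w
      rw [hk, pow_succ'] at hunit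
      exact not_unit_mulL hL hnu _ hunit
    have hY0 : b ^ d - θ ≠ 0 := by
      intro h
      have hbd : b ^ d = θ := by rwa [sub_eq_zero] at h
      have h1 : b ^ d * b ^ d = 0 := by rw [hbd, hθθ]
      exact hbdne (pow_regL hLb d _ h1)
    have hYu : ¬ IsUnit (b ^ d - θ) := by
      intro h
      obtain ⟨u, hu⟩ := h
      have hbd : b ^ d = (↑u : R) * (1 + (↑u⁻¹ : R) * θ) := by
        rw [mul_add, mul_one, ← mul_assoc, Units.mul_inv, one_mul, hu]
        abel
      have h1w : IsUnit (1 + (↑u⁻¹ : R) * θ) := by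
        refine isUnit_iff_exists.mpr ⟨1 - (↑u⁻¹ : R) * θ, ?_, ?_⟩
        · have h3 : (1 + (↑u⁻¹ : R) * θ) * (1 - (↑u⁻¹ : R) * θ)
              = 1 - ((↑u⁻¹ : R) * θ) * ((↑u⁻¹ : R) * θ) := by noncomm_ring
          rw [h3, hwsq u, sub_zero]
        · have h3 : (1 - (↑u⁻¹ : R) * θ) * (1 + (↑u⁻¹ : R) * θ)
              = 1 - ((↑u⁻¹ : R) * θ) * ((↑u⁻¹ : R) * θ) := by noncomm_ring
          rw [h3, hwsq u, sub_zero]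
      have hunit : IsUnit (b ^ d) := hbd ▸ (Units.isUnit u).mul h1w
      rw [hk, pow_succ'] at hunit
      exact not_unit_mulL hLb hnub _ hunit
    obtain ⟨p, Hf, hHf, hHp⟩ := hufsr.1 _ hX0 hXu
    obtain ⟨q, Kf, hKf, hKp⟩ := hufsr.1 _ hY0 hYu
    set f2 : Fin (d + d) → R :=
      Fin.append (fun _ : Fin d => a) (fun _ : Fin d => b) with hf2_def
    set g2 : Fin (p + q) → R := Fin.append Hf Kf with hg2_def
    have hf2v : ∀ i : Fin (d + d), f2 i = a ∨ f2 i = b := by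
      intro i
      refine Fin.addCases (fun j => ?_) (fun j => ?_) i
      · exact Or.inl (by rw [hf2_def]; exact Fin.append_left _ _ _)
      · exact Or.inr (by rw [hf2_def]; exact Fin.append_right _ _ _)
    have hf2 : ∀ i, SNormal (f2 i) ∧ SIrreducible (f2 i) := by
      intro i
      rcases hf2v i with h | h <;> rw [h]
      · exact ⟨hnorm, hirr⟩
      · exact ⟨hnormb, hirrb⟩
    have hg2 : ∀ i, SNormal (g2 i) ∧ SIrreducible (g2 i) := by
      intro i
      refine Fin.addCases (fun j => ?_) (fun j => ?_) i
      · rw [hg2_def, Fin.append_left]; exact hHf j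
      · rw [hg2_def, Fin.append_right]; exact hKf j
    have hf2p : a ^ d * b ^ d = (List.ofFn f2).prod := by
      rw [hf2_def, List.ofFn_fin_append, List.prod_append, List.ofFn_const, List.ofFn_const,
        List.prod_replicate, List.prod_replicate]
    have hg2p : a ^ d * b ^ d = (List.ofFn g2).prod := by
      rw [hg2_def, List.ofFn_fin_append, List.prod_append, ← hHp, ← hKp, hIdent]
    obtain ⟨hdn2, σ2, hσ2⟩ :=
      hufsr.2 _ hprod0 hprodu (d + d) (p + q) f2 g2 hf2 hg2 hf2p hg2p
    have hslots : ∀ j : Fin (p + q), ∃ W : R, IsUnit W ∧ g2 j = W * a := by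
      intro j
      have h1 := hσ2 (σ2.symm j)
      rw [Equiv.apply_symm_apply] at h1
      rcases hf2v (Fin.cast hdn2.symm (σ2.symm j)) with hv | hv
      · rw [hv] at h1
        exact assoc_left hnorm hR (sassoc_symm h1)
      · rw [hv] at h1
        exact assoc_left hnorm hR (sassoc_symm (sassoc_trans hAB h1))
    have hHW : ∀ i : Fin p, ∃ W : R, IsUnit W ∧ Hf i = W * a := by
      intro i
      have h1 := hslots (Fin.castAdd q i)
      rwa [hg2_def, Fin.append_left] at h1
    have hKW : ∀ i : Fin q, ∃ W : R, IsUnit W ∧ Kf i = W * a := by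
      intro i
      have h1 := hslots (Fin.natAdd p i)
      rwa [hg2_def, Fin.append_right] at h1
    obtain ⟨V, hVu, hVp⟩ := prod_collapse hnorm hR p Hf hHW
    obtain ⟨V', hV'u, hV'p⟩ := prod_collapse hnorm hR q Kf hKW
    have hXV : a ^ d + θ = V * a ^ p := by rw [hHp, hVp]
    have hYV : b ^ d - θ = V' * a ^ q := by rw [hKp, hV'p]
    have hbp : ∀ m : ℕ, ∃ W : R, IsUnit W ∧ b ^ m = W * a ^ m := by
      intro m
      induction m with
      | zero => exact ⟨1, isUnit_one, by simp⟩
      | succ m ih =>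
          obtain ⟨W, hWu, hW⟩ := ih
          obtain ⟨W', hW'u, hW'⟩ := unit_move hnorm hR m W₀ hW₀u
          refine ⟨W * W', hWu.mul hW'u, ?_⟩
          calc b ^ (m + 1) = b ^ m * b := pow_succ b m
            _ = (W * a ^ m) * (W₀ * a) := by rw [hW, hW₀]
            _ = W * ((a ^ m * W₀) * a) := by
                rw [mul_assoc, ← mul_assoc (a ^ m) W₀ a]
            _ = W * ((W' * a ^ m) * a) := by rw [hW']
            _ = (W * W') * (a ^ m * a) := by
                rw [mul_assoc W' (a ^ m) a, ← mul_assoc W W' _]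
            _ = (W * W') * a ^ (m + 1) := by rw [← pow_succ]
    obtain ⟨W₀d, hW₀du, hW₀dp⟩ := hbp d
    have hθ1 : θ = V * a ^ p - a ^ d := by rw [← hXV]; abel
    have hθ2 : θ = W₀d * a ^ d - V' * a ^ q := by rw [← hW₀dp, ← hYV]; abel
    have hkey : ∀ (e : ℕ) (U G : R), IsUnit U → e ≠ 0 → U = G * a ^ e → False := by
      intro e U G hU he hUG
      obtain ⟨u, hu⟩ := hU
      have hL1 : ((↑u⁻¹ : R) * G) * a ^ e = 1 := by
        rw [mul_assoc, ← hUG, ← hu, Units.inv_mul]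
      have h2' : (a ^ e * ((↑u⁻¹ : R) * G) - 1) * a ^ e = 0 := by
        rw [sub_mul, one_mul, mul_assoc, hL1, mul_one, sub_self]
      have h3' := sub_eq_zero.mp (pow_regR hR e _ h2')
      have hunit : IsUnit (a ^ e) := isUnit_iff_exists.mpr ⟨_, h3', hL1⟩
      obtain ⟨k', hk'⟩ := Nat.exists_eq_succ_of_ne_zero he
      rw [hk', pow_succ'] at hunit
      exact not_unit_mulL hL hnu _ hunit
    have hple : ¬ p < d := by
      intro hp
      have hq : d < q := by omega
      have hsplit1 : a ^ d = a ^ (d - p) * a ^ p := by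
        rw [← pow_add]; congr 1; omega
      have hsplit2 : a ^ q = a ^ (q - d) * a ^ d := by
        rw [← pow_add]; congr 1; omega
      have hzero : (V - ((1 + W₀d) - V' * a ^ (q - d)) * a ^ (d - p)) * a ^ p = 0 := by
        have e1 : V * a ^ p = W₀d * a ^ d - V' * a ^ q + a ^ d := by
          have e0 : V * a ^ p = θ + a ^ d := by rw [hθ1]; abel
          rw [hθ2] at e0
          exact e0
        have e2 : (((1 + W₀d) - V' * a ^ (q - d)) * a ^ (d - p)) * a ^ p
            = a ^ d + W₀d * a ^ d - V' * a ^ q := by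
          rw [mul_assoc, ← hsplit1, sub_mul, add_mul, one_mul, mul_assoc, ← hsplit2]
        rw [sub_mul, e1, e2]
        abel
      have hV : V = ((1 + W₀d) - V' * a ^ (q - d)) * a ^ (d - p) :=
        sub_eq_zero.mp (pow_regR hR p _ hzero)
      exact hkey (d - p) V _ hVu (by omega) hV
    have hqle : ¬ q < d := by
      intro hq
      have hp : d < p := by omega
      have hsplit1 : a ^ d = a ^ (d - q) * a ^ q := by
        rw [← pow_add]; congr 1; omega
      have hsplit2 : a ^ p = a ^ (p - d) * a ^ d := by
        rw [← pow_add]; congr 1; omega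
      have hzero : (V' - ((1 + W₀d) - V * a ^ (p - d)) * a ^ (d - q)) * a ^ q = 0 := by
        have e1 : V' * a ^ q = a ^ d + W₀d * a ^ d - V * a ^ p := by
          calc V' * a ^ q = W₀d * a ^ d - θ := by rw [hθ2]; abel
            _ = a ^ d + W₀d * a ^ d - V * a ^ p := by rw [hθ1]; abel
        have e2 : (((1 + W₀d) - V * a ^ (p - d)) * a ^ (d - q)) * a ^ q
            = a ^ d + W₀d * a ^ d - V * a ^ p := by
          rw [mul_assoc, ← hsplit1, sub_mul, add_mul, one_mul, mul_assoc, ← hsplit2]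
        rw [sub_mul, e1, e2]
        abel
      have hV' : V' = ((1 + W₀d) - V * a ^ (p - d)) * a ^ (d - q) :=
        sub_eq_zero.mp (pow_regR hR q _ hzero)
      exact hkey (d - q) V' _ hV'u (by omega) hV'
    have hpd : p = d := by omega
    have hθ1' := hθ1
    rw [hpd] at hθ1'
    have hθc : θ = (V - 1) * a ^ d := by
      rw [sub_mul, one_mul]
      exact hθ1'
    have hc0 : V - 1 ≠ 0 := by
      intro h
      rw [h, zero_mul] at hθc
      exact hθ0 hθc
    have hcu : ¬ IsUnit (V - 1) := by
      intro h
      obtain ⟨u, hu⟩ := h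
      have had : a ^ d = (↑u⁻¹ : R) * θ := by
        rw [hθc, ← hu, ← mul_assoc, Units.inv_mul, one_mul]
      have hzz : a ^ d * a ^ d = 0 := by
        rw [had, mul_assoc, ← mul_assoc θ ((↑u⁻¹ : R)) θ, hrule ((↑u⁻¹ : R)),
          mul_assoc, hθθ, mul_zero, mul_zero]
      exact hadne (pow_regL hL d _ hzz)
    obtain ⟨m, Mf, hMf, hMp⟩ := hufsr.1 _ hc0 hcu
    set g3 : Fin (m + d) → R := Fin.append Mf (fun _ : Fin d => a) with hg3_def
    have hg3 : ∀ i, SNormal (g3 i) ∧ SIrreducible (g3 i) := by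
      intro i
      refine Fin.addCases (fun j => ?_) (fun j => ?_) i
      · rw [hg3_def, Fin.append_left]; exact hMf j
      · rw [hg3_def, Fin.append_right]; exact ⟨hnorm, hirr⟩
    have hg3p : θ = (List.ofFn g3).prod := by
      rw [hg3_def, List.ofFn_fin_append, List.prod_append, List.ofFn_const,
        List.prod_replicate, ← hMp, ← hθc]
    obtain ⟨hdn3, -, -⟩ := hufsr.2 θ hθ0 hθu d (m + d) fθ g3 hfθ hg3 hθprod hg3p
    have hm0 : m = 0 := by omega
    subst hm0
    rw [List.ofFn_zero, List.prod_nil] at hMp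
    exact hcu (by rw [hMp]; exact isUnit_one)
  · -- CASE A : a is not associated to its conjugate
    have hx0 : a * θ ≠ 0 := fun h => hθ0 (hL _ h)
    have hxu : ¬ IsUnit (a * θ) := not_unit_mulL hL hnu θ
    set f1 : Fin (d + 1) → R := Fin.cons a fθ with hf1_def
    set g1 : Fin (d + 1) → R := Fin.snoc fθ b with hg1_def
    have hf1 : ∀ i, SNormal (f1 i) ∧ SIrreducible (f1 i) := by
      intro i
      refine Fin.cases ?_ (fun j => ?_) i
      · rw [hf1_def, Fin.cons_zero]; exact ⟨hnorm, hirr⟩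
      · rw [hf1_def, Fin.cons_succ]; exact hfθ j
    have hg1 : ∀ i, SNormal (g1 i) ∧ SIrreducible (g1 i) := by
      intro i
      refine Fin.lastCases ?_ (fun j => ?_) i
      · rw [hg1_def, Fin.snoc_last]; exact ⟨hnormb, hirrb⟩
      · rw [hg1_def, Fin.snoc_castSucc]; exact hfθ j
    have hf1l : List.ofFn f1 = a :: List.ofFn fθ := by
      rw [hf1_def, List.ofFn_succ]
      congr 1
    have hg1l : List.ofFn g1 = List.ofFn fθ ++ [b] := by
      rw [hg1_def, List.ofFn_succ']
      rw [List.concat_eq_append]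
      congr 1
      · congr 1
        funext j
        simp
      · rw [Fin.snoc_last]
    have hf1p : a * θ = (List.ofFn f1).prod := by
      rw [hf1l, List.prod_cons, ← hθprod]
    have hg1p : a * θ = (List.ofFn g1).prod := by
      rw [hg1l, List.prod_append, List.prod_cons, List.prod_nil, mul_one, ← hθprod, haθ]
    obtain ⟨hdn1, σ1, hσ1⟩ :=
      hufsr.2 _ hx0 hxu (d + 1) (d + 1) f1 g1 hf1 hg1 hf1p hg1p
    have hcast : ∀ i : Fin (d + 1), Fin.cast hdn1.symm i = i := by
      intro i; ext; simp
    have hinj : (Finset.univ.filter fun i : Fin (d + 1) => SAssociated (g1 i) b).card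
        ≤ (Finset.univ.filter fun i : Fin (d + 1) => SAssociated (f1 i) b).card := by
      apply Finset.card_le_card_of_injOn (fun i => σ1.symm i)
      · intro i hi
        simp only [Finset.mem_coe, Finset.mem_filter, Finset.mem_univ, true_and] at hi ⊢
        have h1 := hσ1 (σ1.symm i)
        rw [Equiv.apply_symm_apply, hcast] at h1
        exact sassoc_trans h1 hi
      · intro i _ j _ h
        exact σ1.symm.injective h
    have hcard_f : (Finset.univ.filter fun i : Fin (d + 1) => SAssociated (f1 i) b).card
        = (Finset.univ.filter fun i : Fin d => SAssociated (fθ i) b).card := by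
      rw [Finset.card_filter, Finset.card_filter, Fin.sum_univ_succ]
      have h0 : ¬ SAssociated (f1 0) b := by
        rw [hf1_def, Fin.cons_zero]; exact hAB
      rw [if_neg h0, zero_add]
      apply Finset.sum_congr rfl
      intro i _
      rw [hf1_def, Fin.cons_succ]
    have hcard_g : (Finset.univ.filter fun i : Fin (d + 1) => SAssociated (g1 i) b).card
        = (Finset.univ.filter fun i : Fin d => SAssociated (fθ i) b).card + 1 := by
      rw [Finset.card_filter, Finset.card_filter, Fin.sum_univ_castSucc]
      have hlast : SAssociated (g1 (Fin.last d)) b := by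
        rw [hg1_def, Fin.snoc_last]; exact sassoc_refl b
      rw [if_pos hlast]
      congr 1
      apply Finset.sum_congr rfl
      intro i _
      rw [hg1_def, Fin.snoc_castSucc]
    omega
end

section
/- Let R be a supercommutative superring that is a unique factorization superring (UFSR). Then R contains a nonzero normal irreducible element that is also a zerodivisor: there exists a : R with a ≠ 0, a normal, a irreducible, and some x ≠ 0 with a * x = 0 or x * a = 0. (Remark 3.7 iii of the paper.) -/
private lemma ufsr_aux_zerodiv {R : Type*} [Ring R] :
    ∀ (L : List R) (y : R), y ≠ 0 → L.prod * y = 0 →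
      ∃ a ∈ L, ∃ x : R, x ≠ 0 ∧ a * x = 0 := by
  intro L
  induction L with
  | nil =>
    intro y hy h
    simp only [List.prod_nil, one_mul] at h
    exact absurd h hy
  | cons a L ih =>
    intro y hy h
    rw [List.prod_cons, mul_assoc] at h
    by_cases h0 : L.prod * y = 0
    · obtain ⟨b, hb, x, hx⟩ := ih y hy h0
      exact ⟨b, List.mem_cons_of_mem _ hb, x, hx⟩
    · exact ⟨a, List.mem_cons_self, L.prod * y, h0, h⟩

/-- **Remark 3.7 iii)**: every UFSR contains a nonzero normal irreducible element
which is a zerodivisor. -/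
theorem ufsr_exists_nonzero_normal_irreducible_zerodivisor
    {R : Type*} [Ring R] [Nontrivial R]
    (𝒜 : ZMod 2 → AddSubgroup R) [GradedRing 𝒜]
    (hsc : SuperComm 𝒜) (h2 : TwoRegular R) (hodd : 𝒜 1 ≠ ⊥)
    (hufsr : IsUFSR R) :
    ∃ a : R, a ≠ 0 ∧ SNormal a ∧ SIrreducible a ∧
      ∃ x : R, x ≠ 0 ∧ (a * x = 0 ∨ x * a = 0) := by
  obtain ⟨z, hz, hz0⟩ : ∃ z ∈ 𝒜 1, z ≠ 0 := by
    by_contra h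
    push_neg at h
    exact hodd ((AddSubgroup.eq_bot_iff_forall _).mpr h)
  have hzz : z * z = 0 := by
    have hsq := hsc 1 1 z hz z hz
    have hval : ((1 : ZMod 2)).val = 1 := rfl
    rw [hval, mul_one, pow_one, neg_one_zsmul] at hsq
    apply h2
    rw [two_mul]
    rw [eq_neg_iff_add_eq_zero] at hsq
    exact hsq
  have hzu : ¬ IsUnit z := by
    intro hu
    exact hz0 ((IsUnit.mul_left_eq_zero hu).mp hzz)
  obtain ⟨d, f, hf, hfz⟩ := hufsr.1 z hz0 hzu
  have hprod : (List.ofFn f).prod * z = 0 := by rw [← hfz]; exact hzz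
  obtain ⟨a, ha, x, hx0, hax⟩ := ufsr_aux_zerodiv (List.ofFn f) z hz0 hprod
  obtain ⟨i, hi⟩ := List.mem_ofFn.mp ha
  have ha0 : a ≠ 0 := by
    intro h0
    apply hz0
    rw [hfz]
    exact List.prod_eq_zero (h0 ▸ ha)
  exact ⟨a, ha0, hi ▸ (hf i).1, hi ▸ (hf i).2, x, hx0, Or.inl hax⟩
end

section
/- Let R be a supercommutative superring that is a superdomain. Then the nilradical of R equals the canonical superideal: for every x : R, IsNilpotent x ↔ x ∈ 𝒥. (Remark following Definition 2.4 of the paper: if R is a superdomain then Nil(R) = 𝒥_R.) -/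
section NilAux
variable {R : Type*} [Ring R]

/-- If `t` satisfies `t*a*t = 0` for all `a`, and `y^m = 0`, then `(y+t)^(2m) = 0`. -/
lemma aux_step {t y : R} (ht : ∀ a : R, t * a * t = 0)
    {m : ℕ} (hy : y ^ m = 0) : (y + t) ^ (2 * m) = 0 := by
  set T : Ideal R := Ideal.span {x : R | ∃ b : R, x = t * b} with hTdef
  have hgen : ∀ b : R, t * b ∈ T := fun b => Ideal.subset_span ⟨b, rfl⟩
  have htT : t ∈ T := by simpa using hgen 1
  -- T is stable under right multiplication
  have hright : ∀ w ∈ T, ∀ r : R, w * r ∈ T := by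
    intro w hw
    induction hw using Submodule.span_induction with
    | mem x hx => rintro r; obtain ⟨b, rfl⟩ := hx; rw [mul_assoc]; exact hgen _
    | zero => intro r; rw [zero_mul]; exact zero_mem T
    | add x y _ _ hx hy => intro r; rw [add_mul]; exact add_mem (hx r) (hy r)
    | smul a x _ hx => intro r; rw [smul_eq_mul, mul_assoc]; exact Ideal.mul_mem_left T a (hx r)
  -- products of two elements of T vanish
  have hTT : ∀ w ∈ T, ∀ w' ∈ T, w * w' = 0 := by
    have base : ∀ b : R, ∀ w' ∈ T, (t * b) * w' = 0 := by
      intro b w' hw'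
      induction hw' using Submodule.span_induction generalizing b with
      | mem x hx => obtain ⟨c, rfl⟩ := hx
                    calc (t * b) * (t * c) = (t * b * t) * c := by noncomm_ring
                    _ = 0 := by rw [ht b, zero_mul]
      | zero => rw [mul_zero]
      | add x y _ _ hx hy => rw [mul_add, hx, hy, add_zero]
      | smul a x _ hx =>
          rw [smul_eq_mul, show (t * b) * (a * x) = (t * (b * a)) * x by noncomm_ring, hx]
    intro w hw
    induction hw using Submodule.span_induction with
    | mem x hx => obtain ⟨b, rfl⟩ := hx; exact base b
    | zero => intro w' _; rw [zero_mul]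
    | add x y _ _ hx hy => intro w' hw'; rw [add_mul, hx w' hw', hy w' hw', add_zero]
    | smul a x _ hx => intro w' hw';
                       rw [smul_eq_mul, mul_assoc, hx w' hw', mul_zero]
  -- (y+t)^k - y^k ∈ T
  have hpow : ∀ k : ℕ, (y + t) ^ k - y ^ k ∈ T := by
    intro k
    induction k with
    | zero => simpa using zero_mem T
    | succ k ih =>
        have : (y + t) ^ (k + 1) - y ^ (k + 1)
            = ((y + t) ^ k - y ^ k) * (y + t) + y ^ k * t := by
          rw [pow_succ, pow_succ]; noncomm_ring
        rw [this]
        exact add_mem (hright _ ih _) (Ideal.mul_mem_left T _ htT)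
  have hm : (y + t) ^ m ∈ T := by simpa [hy] using hpow m
  rw [two_mul, pow_add]
  exact hTT _ hm _ hm

/-- Every element of the span of a set of central square-zero elements is nilpotent. -/
lemma aux_span_nil {Z : Set R} (hZc : ∀ z ∈ Z, ∀ r : R, z * r = r * z)
    (hZsq : ∀ z ∈ Z, z * z = 0) :
    ∀ w ∈ Ideal.span Z, IsNilpotent w := by
  intro w hw
  obtain ⟨n, f, g, rfl⟩ := Submodule.mem_span_set'.mp hw
  clear hw
  induction n with
  | zero => simp
  | succ n ih =>
      rw [Fin.sum_univ_succ]
      set t : R := f 0 • (g 0 : R) with htdef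
      set y : R := ∑ i : Fin n, f i.succ • ((g i.succ : R)) with hydef
      obtain ⟨m, hm⟩ := ih (fun i => f i.succ) (fun i => g i.succ)
      have hz := (g 0).2
      have ht : ∀ a : R, t * a * t = 0 := by
        intro a
        have : t * a * t = (f 0 * a * f 0) * ((g 0 : R) * (g 0 : R)) := by
          rw [htdef, smul_eq_mul]
          rw [show f 0 * (g 0 : R) * a * (f 0 * (g 0 : R))
              = f 0 * ((g 0 : R) * (a * f 0)) * (g 0 : R) by noncomm_ring,
            hZc _ hz (a * f 0)]
          noncomm_ring
        rw [this, hZsq _ hz, mul_zero]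
      have h0 : (y + t) ^ (2 * m) = 0 := aux_step ht hm
      exact ⟨2 * m, by rw [add_comm t y]; exact h0⟩
end NilAux

/-- Remark after Definition 2.4: if `R` is a superdomain, the nilradical of `R`
equals the canonical superideal `𝒥`. -/
theorem superdomain_nilpotent_iff_mem_canonicalSuperideal
    {R : Type*} [Ring R] [Nontrivial R]
    (𝒜 : ZMod 2 → AddSubgroup R) [GradedRing 𝒜]
    (hsc : SuperComm 𝒜) (h2 : TwoRegular R)
    (hdom : IsSuperdomain 𝒜) :
    ∀ x : R, IsNilpotent x ↔ x ∈ canonicalSuperideal 𝒜 := by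
  classical
  -- odd elements square to zero
  have odd_sq : ∀ a ∈ 𝒜 1, a * a = 0 := by
    intro a ha
    have h := hsc 1 1 a ha a ha
    have : (1 : ZMod 2).val * (1 : ZMod 2).val = 1 := rfl
    rw [this, pow_one, neg_smul, one_smul] at h
    apply h2
    rw [two_mul]
    nth_rewrite 1 [h]
    rw [neg_add_cancel]
  -- even elements are central
  have even_comm : ∀ a ∈ 𝒜 0, ∀ r : R, a * r = r * a := by
    intro a ha r
    induction r using DirectSum.Decomposition.inductionOn 𝒜 with
    | zero => rw [mul_zero, zero_mul]
    | homogeneous m =>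
        rename_i i
        have h := hsc i 0 (m : R) m.2 a ha
        have h0 : (0 : ZMod 2).val = 0 := rfl
        rw [h0, Nat.mul_zero, pow_zero, one_smul] at h
        exact h.symm
    | add m m' hm hm' => rw [mul_add, add_mul, hm, hm']
  -- anticommutation of odd elements
  have odd_anticomm : ∀ b ∈ 𝒜 1, ∀ c ∈ 𝒜 1, b * c = -(c * b) := by
    intro b hb c hc
    have h := hsc 1 1 b hb c hc
    have : (1 : ZMod 2).val * (1 : ZMod 2).val = 1 := rfl
    rw [this, pow_one, neg_smul, one_smul] at h
    exact h
  -- the set of products of two odd elements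
  set Z : Set R := {z : R | ∃ b ∈ 𝒜 1, ∃ c ∈ 𝒜 1, z = b * c} with hZdef
  have hZeven : ∀ z ∈ Z, z ∈ 𝒜 0 := by
    rintro z ⟨b, hb, c, hc, rfl⟩
    have := SetLike.mul_mem_graded hb hc
    rwa [show (1 + 1 : ZMod 2) = 0 from rfl] at this
  have hZc : ∀ z ∈ Z, ∀ r : R, z * r = r * z := fun z hz => even_comm z (hZeven z hz)
  have hZsq : ∀ z ∈ Z, z * z = 0 := by
    rintro z ⟨b, hb, c, hc, rfl⟩
    have h1 : c * b = -(b * c) := odd_anticomm c hc b hb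
    have : b * c * (b * c) = b * (c * b) * c := by noncomm_ring
    rw [this, h1, show b * -(b * c) * c = -(b * b * (c * c)) by noncomm_ring,
      odd_sq b hb]
    simp
  intro x
  constructor
  · -- nilpotent → in 𝒥
    rintro ⟨n, hn⟩
    have key : ∀ n : ℕ, x ^ n ∈ canonicalSuperideal 𝒜 → x ∈ canonicalSuperideal 𝒜 := by
      intro n
      induction n with
      | zero => intro h; rw [pow_zero] at h; exact absurd h hdom.1
      | succ n ih =>
          intro h
          rw [pow_succ] at h
          rcases hdom.2 _ _ h with h' | h'
          · exact ih h'
          · exact h'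
    exact key n (by rw [hn]; exact zero_mem _)
  · -- in 𝒥 → nilpotent
    intro hx
    -- every element of 𝒥 is (odd element) + (element of span Z)
    have main : ∀ y ∈ canonicalSuperideal 𝒜,
        ∃ u ∈ 𝒜 1, y - u ∈ Ideal.span Z := by
      intro y hy
      induction hy using Submodule.span_induction with
      | mem s hs => exact ⟨s, hs, by rw [sub_self]; exact zero_mem _⟩
      | zero => exact ⟨0, zero_mem _, by rw [sub_zero]; exact zero_mem _⟩
      | add a b _ _ ha hb =>
          obtain ⟨u, hu, hv⟩ := ha
          obtain ⟨u', hu', hv'⟩ := hb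
          refine ⟨u + u', add_mem hu hu', ?_⟩
          rw [show a + b - (u + u') = (a - u) + (b - u') by abel]
          exact add_mem hv hv'
      | smul r a _ ha =>
          obtain ⟨u, hu, hv⟩ := ha
          set e : R := (DirectSum.decompose 𝒜 r 0 : R) with hedef
          set o : R := (DirectSum.decompose 𝒜 r 1 : R) with hodef
          have hre : e + o = r := by
            have h := DirectSum.sum_support_decompose 𝒜 r
            have huniv : ∑ i : ZMod 2, (DirectSum.decompose 𝒜 r i : R) = r := by
              conv_rhs => rw [← h]
              symm
              apply Finset.sum_subset (Finset.subset_univ _)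
              intro i _ hi
              rw [DFinsupp.notMem_support_iff.mp hi]
              simp
            rw [← huniv, show (Finset.univ : Finset (ZMod 2)) = {0, 1} by decide,
              Finset.sum_insert (by decide), Finset.sum_singleton]
          have he : e ∈ 𝒜 0 := (DirectSum.decompose 𝒜 r 0).2
          have ho : o ∈ 𝒜 1 := (DirectSum.decompose 𝒜 r 1).2
          refine ⟨e * u, ?_, ?_⟩
          · have := SetLike.mul_mem_graded he hu
            rwa [show (0 + 1 : ZMod 2) = 1 from rfl] at this
          · have hou : o * u ∈ Z := ⟨o, ho, u, hu, rfl⟩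
            have : r • a - e * u = o * u + r * (a - u) := by
              rw [smul_eq_mul, ← hre]; noncomm_ring
            rw [this]
            exact add_mem (Ideal.subset_span hou)
              (Ideal.mul_mem_left _ _ hv)
    obtain ⟨u, hu, hv⟩ := main x hx
    set v : R := x - u with hvdef
    -- span Z is stable under right multiplication
    have hright : ∀ w ∈ Ideal.span Z, ∀ r : R, w * r ∈ Ideal.span Z := by
      intro w hw
      induction hw using Submodule.span_induction with
      | mem z hz => intro r; rw [hZc z hz r]; exact Ideal.mul_mem_left _ _ (Ideal.subset_span hz)
      | zero => intro r; rw [zero_mul]; exact zero_mem _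
      | add a b _ _ ha hb => intro r; rw [add_mul]; exact add_mem (ha r) (hb r)
      | smul s a _ ha => intro r; rw [smul_eq_mul, mul_assoc]; exact Ideal.mul_mem_left _ _ (ha r)
    -- x² lies in span Z
    have hx2 : x * x ∈ Ideal.span Z := by
      have hxe : x * x = u * v + v * u + v * v + u * u := by
        rw [hvdef]; noncomm_ring
      rw [hxe, odd_sq u hu, add_zero]
      exact add_mem (add_mem (Ideal.mul_mem_left _ _ hv) (hright _ hv u)) (hright _ hv v)
    obtain ⟨m, hm⟩ := aux_span_nil hZc hZsq _ hx2
    exact ⟨2 * m, by rw [pow_mul, sq]; exact hm⟩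
end

section
/- Let A = TrivSqZeroExt ℤ ℤ (the superring ℤ[ε] with ε odd and ε² = 0; A is a commutative ring), and write inl a + inr b for the element a + bε. For every prime p : ℤ one has (inl p + inr 1) * (inl p - inr 1) = (inl p) ^ 2 and (inl p + inr p) * (inl p - inr p) = (inl p) ^ 2, yet ¬ Associated (inl p + inr 1) (inl p + inr p) and ¬ Associated (inl p + inr 1) (inl p - inr p). Hence p² admits two factorizations into irreducibles whose factors are not associates, so ℤ[ε] is not a unique factorization superring. (Remark 3.8 of the paper.) -/
open TrivSqZeroExt

namespace TrivSqZeroExt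

theorem inl_add_inr_mul_inl_sub_inr {R M : Type*} [CommRing R] [AddCommGroup M] [Module R M]
    [Module Rᵐᵒᵖ M] [IsCentralScalar R M] (a : R) (m : M) :
    (inl a + inr m : TrivSqZeroExt R M) * (inl a - inr m) = inl a ^ 2 := by
  rw [← sq_sub_sq, sq (inr m), inr_mul_inr, sub_zero]

/-- A unit `u` with `(a + mε) u = a + nε` has `u.fst = 1`, so `n = m + a u.snd`. -/
theorem dvd_sub_of_associated_inl_add_inr {R : Type*} [CommRing R] [IsDomain R] {a m n : R}
    (ha : a ≠ 0) (h : Associated (inl a + inr m : TrivSqZeroExt R R) (inl a + inr n)) :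
    a ∣ n - m := by
  obtain ⟨u, hu⟩ := h
  have hfst : a * (u : TrivSqZeroExt R R).fst = a * 1 := by
    simpa using congrArg fst hu
  have hsnd : m * (u : TrivSqZeroExt R R).fst + a * (u : TrivSqZeroExt R R).snd = n := by
    simpa [mul_comm] using congrArg snd hu
  rw [mul_left_cancel₀ ha hfst, mul_one] at hsnd
  exact ⟨_, by rw [← hsnd, add_sub_cancel_left]⟩

end TrivSqZeroExt

/-- **Remark 3.8**: in `ℤ[ε] = TrivSqZeroExt ℤ ℤ`, for every prime `p` the element
`p²` factors as `(p + ε)(p - ε)` and as `(p + pε)(p - pε)`, yet the factors are not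
associates; hence `ℤ[ε]` is not a unique factorization superring. -/
theorem zEps_not_ufsr (p : ℤ) (hp : Prime p) :
    (inl p + inr 1 : TrivSqZeroExt ℤ ℤ) * (inl p - inr 1) = (inl p) ^ 2 ∧
    (inl p + inr p : TrivSqZeroExt ℤ ℤ) * (inl p - inr p) = (inl p) ^ 2 ∧
    ¬ Associated (inl p + inr 1 : TrivSqZeroExt ℤ ℤ) (inl p + inr p) ∧
    ¬ Associated (inl p + inr 1 : TrivSqZeroExt ℤ ℤ) (inl p - inr p) := by
  have not_dvd_one : ¬ p ∣ 1 := fun h => hp.not_isUnit (isUnit_of_dvd_one h)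
  refine ⟨inl_add_inr_mul_inl_sub_inr _ _, inl_add_inr_mul_inl_sub_inr _ _, fun h => ?_, fun h => ?_⟩
  · exact not_dvd_one <|
      (dvd_sub_right dvd_rfl).mp (dvd_sub_of_associated_inl_add_inr hp.ne_zero h)
  · rw [sub_eq_add_neg, ← inr_neg] at h
    exact not_dvd_one <|
      (dvd_sub_right (dvd_neg.mpr dvd_rfl)).mp (dvd_sub_of_associated_inl_add_inr hp.ne_zero h)
end

section
/- Let Λ = ExteriorAlgebra ℂ (Fin 2 → ℂ) and for i : Fin 2 let e i = ExteriorAlgebra.ι ℂ (Pi.single i 1) (the odd generators θ₁, θ₂, satisfying (e i)² = 0). Then e 0 * e 1 = e 0 * (e 0 + e 1), yet e 1 is not associated to e 0 + e 1: there are no units u v : Λˣ with e 0 + e 1 = ↑u * e 1 * ↑v. Hence unique factorization fails in the regular local superring ℂ[θ₁, θ₂], showing that the Auslander–Buchsbaum theorem has no analogue for superrings. (Section 4.2 of the paper.) -/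
/-!
The identity holds because `θ₁² = 0`. If `θ₁ + θ₂ = u θ₂ v` with units `u, v`, apply the
algebra map induced by the projection onto the `θ₁`-coordinate: it kills `θ₂` but not `θ₁ + θ₂`.
-/

namespace ExteriorAlgebra

variable {R M N : Type*} [CommRing R] [AddCommGroup M] [Module R M] [AddCommGroup N] [Module R N]

theorem ι_mul_ι_add_self (x y : M) : ι R x * (ι R x + ι R y) = ι R x * ι R y := by
  rw [mul_add, ι_sq_zero, zero_add]

theorem not_exists_units_ι_eq_mul_ι_mul {x y : M} (f : M →ₗ[R] N) (hx : f x ≠ 0) (hy : f y = 0) :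
    ¬ ∃ u v : (ExteriorAlgebra R M)ˣ, ι R x = u * ι R y * v := by
  rintro ⟨u, v, h⟩
  have hmap := congrArg (map f) h
  rw [map_mul, map_mul, map_apply_ι, map_apply_ι, hy, map_zero, mul_zero, zero_mul,
    ι_eq_zero_iff] at hmap
  exact hx hmap

end ExteriorAlgebra

/-- **Section 4.2**: in the regular local superring `ℂ[θ₁, θ₂]` (the exterior
algebra on two generators over `ℂ`) we have `θ₁θ₂ = θ₁(θ₁ + θ₂)` but `θ₂` is not
associated to `θ₁ + θ₂`; hence unique factorization fails, and the
Auslander–Buchsbaum theorem has no analogue for superrings. -/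
theorem exteriorAlgebra_unique_factorization_fails :
    (ExteriorAlgebra.ι ℂ (Pi.single 0 1 : Fin 2 → ℂ)) *
        (ExteriorAlgebra.ι ℂ (Pi.single 1 1 : Fin 2 → ℂ)) =
      (ExteriorAlgebra.ι ℂ (Pi.single 0 1 : Fin 2 → ℂ)) *
        ((ExteriorAlgebra.ι ℂ (Pi.single 0 1 : Fin 2 → ℂ)) +
          (ExteriorAlgebra.ι ℂ (Pi.single 1 1 : Fin 2 → ℂ))) ∧
    ¬ ∃ u v : (ExteriorAlgebra ℂ (Fin 2 → ℂ))ˣ,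
        (ExteriorAlgebra.ι ℂ (Pi.single 0 1 : Fin 2 → ℂ)) +
            (ExteriorAlgebra.ι ℂ (Pi.single 1 1 : Fin 2 → ℂ)) =
          (u : ExteriorAlgebra ℂ (Fin 2 → ℂ)) *
            (ExteriorAlgebra.ι ℂ (Pi.single 1 1 : Fin 2 → ℂ)) *
            (v : ExteriorAlgebra ℂ (Fin 2 → ℂ)) := by
  refine ⟨(ExteriorAlgebra.ι_mul_ι_add_self _ _).symm, ?_⟩
  rw [← map_add]
  exact ExteriorAlgebra.not_exists_units_ι_eq_mul_ι_mul (LinearMap.proj 0) (by simp) (by simp)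
end
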